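/- Let ρ be a fully separable tripartite density matrix on C^{d_A}⊗C^{d_B}⊗C^{d_C}, and fix (N_A,M_A), (N_B,M_B), (N_C,M_C) POVMs on the three factors with parameters x_A, x_B, x_C. Then for all real numbers μ, ν and every positive integer l, ‖M_{μ,ν}^l(ρ_{C|AB})‖_tr ≤ √( ( l μ² + (d_C−1)(d_C² + M_C² x_C)/(d_C M_C (M_C−1)) ) · ( l ν² + (d_A−1)(d_A² + M_A² x_A)/(d_A M_A (M_A−1)) · (d_B−1)(d_B² + M_B² x_B)/(d_B M_B (M_B−1)) ) ). -/

import Mathlib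

open Matrix
open scoped BigOperators ComplexOrder Kronecker

noncomputable section

/-- A density matrix on `ℂ^d`: positive semidefinite with trace 1. -/
def IsDensityMatrix {d : ℕ} (ρ : Matrix (Fin d) (Fin d) ℂ) : Prop :=
  ρ.PosSemidef ∧ ρ.trace = 1

/-- An `(N,M)` POVM on `ℂ^d` with parameter `x`. -/
def IsNMPOVM (d N M : ℕ) (x : ℝ)
    (E : Fin N → Fin M → Matrix (Fin d) (Fin d) ℂ) : Prop :=
  (∀ α k, (E α k).PosSemidef) ∧
  (∀ α, ∑ k, E α k = 1) ∧
  (∀ α k, (E α k).trace = (d : ℂ) / (M : ℂ)) ∧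
  (∀ α k, (E α k * E α k).trace = (x : ℂ)) ∧
  (∀ α k l, k ≠ l →
    (E α k * E α l).trace = ((((d : ℝ) - M * x) / (M * ((M : ℝ) - 1)) : ℝ) : ℂ)) ∧
  (∀ α β k l, α ≠ β → (E α k * E β l).trace = (d : ℂ) / ((M : ℂ) ^ 2)) ∧
  ((d : ℝ) / (M : ℝ) ^ 2 < x ∧ x ≤ min ((d : ℝ) ^ 2 / (M : ℝ) ^ 2) ((d : ℝ) / (M : ℝ)))

/-- Full separability of a tripartite density matrix. -/
def FullySeparable3 {dA dB dC : ℕ}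
    (ρ : Matrix (Fin dA × Fin dB × Fin dC) (Fin dA × Fin dB × Fin dC) ℂ) : Prop :=
  ∃ (n : ℕ) (p : Fin n → ℝ) (ρA : Fin n → Matrix (Fin dA) (Fin dA) ℂ)
    (ρB : Fin n → Matrix (Fin dB) (Fin dB) ℂ)
    (ρC : Fin n → Matrix (Fin dC) (Fin dC) ℂ),
    (∀ i, 0 ≤ p i) ∧ (∑ i, p i = 1) ∧
    (∀ i, IsDensityMatrix (ρA i)) ∧ (∀ i, IsDensityMatrix (ρB i)) ∧
    (∀ i, IsDensityMatrix (ρC i)) ∧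
    ρ = ∑ i, (p i : ℂ) • (ρA i ⊗ₖ (ρB i ⊗ₖ ρC i))

/-- The positive semidefinite square root of a positive semidefinite matrix
(Mathlib's former `Matrix.PosSemidef.sqrt`, removed since). -/
def Matrix.PosSemidef.sqrt {n 𝕜 : Type*} [RCLike 𝕜] [Fintype n] [DecidableEq n]
    {A : Matrix n n 𝕜} (hA : A.PosSemidef) : Matrix n n 𝕜 :=
  hA.1.eigenvectorUnitary.1 * diagonal ((↑) ∘ (√·) ∘ hA.1.eigenvalues) *
  (star hA.1.eigenvectorUnitary : Matrix n n 𝕜)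

/-- The trace norm `‖G‖_tr = tr √(GᴴG)` of a (rectangular) real matrix. -/
def traceNorm {m n : Type*} [Fintype m] [Fintype n] [DecidableEq n]
    (G : Matrix m n ℝ) : ℝ :=
  (Matrix.posSemidef_conjTranspose_mul_self G).sqrt.trace

/-- Reduced density matrix on `C` (partial trace over `AB`). -/
def redC {dA dB dC : ℕ}
    (ρ : Matrix (Fin dA × Fin dB × Fin dC) (Fin dA × Fin dB × Fin dC) ℂ) :
    Matrix (Fin dC) (Fin dC) ℂ :=
  Matrix.of fun m m' => ∑ i : Fin dA, ∑ k : Fin dB, ρ (i, k, m) (i, k, m')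

/-- Reduced density matrix on `AB` (partial trace over `C`). -/
def redAB {dA dB dC : ℕ}
    (ρ : Matrix (Fin dA × Fin dB × Fin dC) (Fin dA × Fin dB × Fin dC) ℂ) :
    Matrix (Fin dA × Fin dB) (Fin dA × Fin dB) ℂ :=
  Matrix.of fun ik i'k' => ∑ m : Fin dC, ρ (ik.1, ik.2, m) (i'k'.1, i'k'.2, m)

/-- The block matrix `M_{μ,ν}^l(ρ_{C|AB})` for the bipartition `C|AB`. -/
def MMatCAB {dA dB dC : ℕ} (NA MA NB MB NC MC l : ℕ)
    (EA : Fin NA → Fin MA → Matrix (Fin dA) (Fin dA) ℂ)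
    (EB : Fin NB → Fin MB → Matrix (Fin dB) (Fin dB) ℂ)
    (EC : Fin NC → Fin MC → Matrix (Fin dC) (Fin dC) ℂ)
    (μ ν : ℝ)
    (ρ : Matrix (Fin dA × Fin dB × Fin dC) (Fin dA × Fin dB × Fin dC) ℂ) :
    Matrix (Fin l ⊕ (Fin NC × Fin MC))
      (Fin l ⊕ ((Fin NA × Fin MA) × (Fin NB × Fin MB))) ℝ :=
  Matrix.fromBlocks
    (Matrix.of fun _ _ => μ * ν)
    (Matrix.of fun _ c =>
      μ * (((EA c.1.1 c.1.2 ⊗ₖ EB c.2.1 c.2.2) * redAB ρ).trace.re))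
    (Matrix.of fun gn _ => ν * ((EC gn.1 gn.2 * redC ρ).trace.re))
    (Matrix.of fun gn c =>
      ((EA c.1.1 c.1.2 ⊗ₖ (EB c.2.1 c.2.2 ⊗ₖ EC gn.1 gn.2)) * ρ).trace.re)

lemma Matrix.PosSemidef.posSemidef_sqrt {n 𝕜 : Type*} [RCLike 𝕜] [Fintype n] [DecidableEq n]
    {A : Matrix n n 𝕜} (hA : A.PosSemidef) : hA.sqrt.PosSemidef := by
  have key : ∀ (U : Matrix n n 𝕜) (f : n → 𝕜), (∀ i, 0 ≤ f i) →
      (U * diagonal f * star U).PosSemidef := fun U f hf => by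
    rw [Matrix.star_eq_conjTranspose]
    exact (posSemidef_diagonal_iff.mpr hf).mul_mul_conjTranspose_same U
  unfold Matrix.PosSemidef.sqrt
  exact key _ _ fun i => by simp [Real.sqrt_nonneg]

lemma Matrix.PosSemidef.sqrt_mul_self {n 𝕜 : Type*} [RCLike 𝕜] [Fintype n] [DecidableEq n]
    {A : Matrix n n 𝕜} (hA : A.PosSemidef) : hA.sqrt * hA.sqrt = A := by
  unfold Matrix.PosSemidef.sqrt
  set U : Matrix n n 𝕜 := (hA.1.eigenvectorUnitary : Matrix n n 𝕜) with hUdef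
  have hU : star U * U = 1 := (Matrix.mem_unitaryGroup_iff').mp (hA.1.eigenvectorUnitary).2
  have e : ∀ f g : n → 𝕜, (U * diagonal f * star U) * (U * diagonal g * star U)
      = U * diagonal (fun i => f i * g i) * star U := by
    intro f g
    calc _ = U * (diagonal f * (star U * U) * diagonal g) * star U := by
          simp only [Matrix.mul_assoc]
      _ = _ := by rw [hU, Matrix.mul_one, diagonal_mul_diagonal]
  rw [e]
  conv_rhs => rw [hA.1.spectral_theorem, Unitary.conjStarAlgAut_apply]
  congr 3
  funext i
  simp only [Function.comp_apply, ← RCLike.ofReal_mul,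
    Real.mul_self_sqrt (hA.eigenvalues_nonneg i)]

namespace SepAux
open Matrix

variable {m n : Type*} [Fintype m] [Fintype n] [DecidableEq n]

lemma collapse' {R : Type*} [CommRing R] {V V' : Matrix n n R} (hV : V' * V = 1) (f g : n → R) :
    (V * diagonal f * V') * (V * diagonal g * V')
      = V * diagonal (fun i => f i * g i) * V' := by
  have : (V * diagonal f * V') * (V * diagonal g * V')
      = V * (diagonal f * ((V' * V) * (diagonal g * V'))) := by
    simp only [Matrix.mul_assoc]
  rw [this, hV, Matrix.one_mul, ← Matrix.mul_assoc (diagonal f), diagonal_mul_diagonal,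
    ← Matrix.mul_assoc]

lemma trace_conj' {R : Type*} [CommRing R] {V V' : Matrix n n R} (hV : V' * V = 1)
    (D : Matrix n n R) : (V * D * V').trace = D.trace := by
  rw [Matrix.trace_mul_cycle, hV, Matrix.one_mul]

lemma collapse {V : Matrix n n ℝ} (hV : star V * V = 1) (f g : n → ℝ) :
    (V * diagonal f * star V) * (V * diagonal g * star V)
      = V * diagonal (fun i => f i * g i) * star V := collapse' hV f g

lemma trace_conj (V : Matrix n n ℝ) (hV : star V * V = 1) (D : Matrix n n ℝ) :
    (V * D * star V).trace = D.trace := trace_conj' hV D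

lemma dot_sq {m' n' : Type*} [Fintype m'] [Fintype n'] (A : Matrix m' n' ℝ) (w : n' → ℝ) :
    (A *ᵥ w) ⬝ᵥ (A *ᵥ w) = ((Aᵀ * A) *ᵥ w) ⬝ᵥ w := by
  rw [Matrix.dotProduct_mulVec, ← Matrix.mulVec_transpose, Matrix.mulVec_mulVec]

lemma exists_contraction (G : Matrix m n ℝ) :
    ∃ W : Matrix m n ℝ, traceNorm G = (Wᵀ * G).trace ∧
      ∀ v : n → ℝ, (W *ᵥ v) ⬝ᵥ (W *ᵥ v) ≤ v ⬝ᵥ v := by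
  classical
  set hH := Matrix.posSemidef_conjTranspose_mul_self G with hHdef
  set S : Matrix n n ℝ := hH.sqrt with hSdef
  have hS : S.PosSemidef := hH.posSemidef_sqrt
  have hSh : S.IsHermitian := hS.1
  set V : Matrix n n ℝ := (hSh.eigenvectorUnitary : Matrix n n ℝ) with hVdef
  set lam : n → ℝ := hSh.eigenvalues with hlamdef
  have hVV : star V * V = 1 := (Matrix.mem_unitaryGroup_iff').mp (hSh.eigenvectorUnitary).2
  have hVV' : V * star V = 1 := (Matrix.mem_unitaryGroup_iff).mp (hSh.eigenvectorUnitary).2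
  have hspec : S = V * diagonal lam * star V := by
    have := hSh.spectral_theorem
    rwa [RCLike.ofReal_real_eq_id, Function.id_comp] at this
  set q : n → ℝ := fun i => if lam i = 0 then 0 else (lam i)⁻¹ with hqdef
  set Sp : Matrix n n ℝ := V * diagonal q * star V with hSpdef
  set W : Matrix m n ℝ := G * Sp with hWdef
  have hstar : ∀ A : Matrix n n ℝ, star A = Aᵀ := fun A => by
    rw [Matrix.star_eq_conjTranspose, Matrix.conjTranspose_eq_transpose_of_trivial]
  have hSpT : Spᵀ = Sp := by
    rw [hSpdef, hstar V]
    simp [Matrix.transpose_mul, Matrix.diagonal_transpose, Matrix.mul_assoc]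
  have hGG : Gᵀ * G = S * S := by
    have : Gᴴ * G = S * S := (hH.sqrt_mul_self).symm
    rwa [Matrix.conjTranspose_eq_transpose_of_trivial] at this
  -- trace identity
  have e1 : S * S = V * diagonal (fun i => lam i * lam i) * star V := by
    rw [hspec]; exact collapse hVV _ _
  have e2 : Sp * (S * S) = V * diagonal (fun i => q i * (lam i * lam i)) * star V := by
    rw [e1, hSpdef]; exact collapse hVV _ _
  have e3 : (S * S) * Sp = V * diagonal (fun i => (lam i * lam i) * q i) * star V := by
    rw [e1, hSpdef]; exact collapse hVV _ _
  have e4 : Sp * ((S * S) * Sp)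
      = V * diagonal (fun i => q i * ((lam i * lam i) * q i)) * star V := by
    rw [e3, hSpdef]; exact collapse hVV _ _
  have htr : (Wᵀ * G).trace = S.trace := by
    have h1 : Wᵀ * G = Sp * (S * S) := by
      rw [hWdef, Matrix.transpose_mul, hSpT, Matrix.mul_assoc, hGG]
    have h3 : (fun i => q i * (lam i * lam i)) = lam := by
      funext i
      by_cases h : lam i = 0
      · simp [hqdef, h]
      · simp only [hqdef, if_neg h]
        field_simp
    rw [h1, e2, h3, trace_conj V hVV, hspec, trace_conj V hVV]
  refine ⟨W, ?_, ?_⟩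
  · rw [htr]; rfl
  · intro v
    have hWW : Wᵀ * W = V * diagonal (fun i => q i * ((lam i * lam i) * q i)) * star V := by
      have h1 : Wᵀ * W = Sp * ((S * S) * Sp) := by
        rw [hWdef, Matrix.transpose_mul, hSpT]
        simp only [Matrix.mul_assoc]
        rw [show Gᵀ * (G * Sp) = (Gᵀ * G) * Sp from (Matrix.mul_assoc _ _ _).symm, hGG]
        simp only [Matrix.mul_assoc]
      rw [h1, e4]
    have hVVT : V * Vᵀ = 1 := by rw [← hstar V]; exact hVV'
    set u : n → ℝ := star V *ᵥ v with hudef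
    have huu : u ⬝ᵥ u = v ⬝ᵥ v := by
      rw [hudef, dot_sq, hstar V, Matrix.transpose_transpose, hVVT, Matrix.one_mulVec]
    have hkey : (W *ᵥ v) ⬝ᵥ (W *ᵥ v)
        = (diagonal (fun i => q i * (lam i * lam i * q i)) *ᵥ u) ⬝ᵥ u := by
      rw [dot_sq, hWW, ← Matrix.mulVec_mulVec, ← Matrix.mulVec_mulVec, dotProduct_comm,
        Matrix.dotProduct_mulVec, ← Matrix.mulVec_transpose, ← hstar V, ← hudef,
        dotProduct_comm]
    rw [hkey, ← huu]
    have hexp : ∀ w : n → ℝ, ∀ f : n → ℝ, (diagonal f *ᵥ w) ⬝ᵥ w = ∑ i, f i * (w i * w i) := by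
      intro w f
      simp [dotProduct, Matrix.mulVec_diagonal, mul_assoc]
    rw [hexp]
    have : u ⬝ᵥ u = ∑ i, u i * u i := rfl
    rw [this]
    apply Finset.sum_le_sum
    intro i _
    by_cases h : lam i = 0
    · simp [hqdef, h, mul_self_nonneg]
    · have : q i * (lam i * lam i * q i) = 1 := by
        simp only [hqdef, if_neg h]
        field_simp
      rw [this, one_mul]


lemma dot_cs {n' : Type*} [Fintype n'] (x y : n' → ℝ) :
    x ⬝ᵥ y ≤ Real.sqrt (x ⬝ᵥ x) * Real.sqrt (y ⬝ᵥ y) := by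
  have h := Real.sum_mul_le_sqrt_mul_sqrt Finset.univ x y
  simpa [dotProduct, pow_two] using h

lemma dot_self_nonneg {n' : Type*} [Fintype n'] (x : n' → ℝ) : 0 ≤ x ⬝ᵥ x :=
  Finset.sum_nonneg fun i _ => mul_self_nonneg (x i)

lemma traceNorm_le_decomp {m n ι : Type*} [Fintype m] [Fintype n] [DecidableEq n] [Fintype ι]
    (G : Matrix m n ℝ) (p : ι → ℝ) (a : ι → m → ℝ) (b : ι → n → ℝ)
    (hp : ∀ i, 0 ≤ p i)
    (hG : G = ∑ i, p i • Matrix.of (fun r c => a i r * b i c)) :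
    traceNorm G ≤ ∑ i, p i * (Real.sqrt (a i ⬝ᵥ a i) * Real.sqrt (b i ⬝ᵥ b i)) := by
  obtain ⟨W, hW1, hW2⟩ := exists_contraction G
  rw [hW1, hG]
  have key : ∀ i, (Wᵀ * Matrix.of (fun r c => a i r * b i c)).trace = (a i) ⬝ᵥ (W *ᵥ b i) := by
    intro i
    simp only [Matrix.trace, Matrix.diag_apply, Matrix.mul_apply, Matrix.transpose_apply,
      Matrix.of_apply, dotProduct, Matrix.mulVec, Finset.mul_sum]
    rw [Finset.sum_comm]
    exact Finset.sum_congr rfl fun r _ => Finset.sum_congr rfl fun c _ => by ring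
  have expand : (Wᵀ * ∑ i, p i • Matrix.of (fun r c => a i r * b i c)).trace
      = ∑ i, p i * ((a i) ⬝ᵥ (W *ᵥ b i)) := by
    rw [Matrix.mul_sum, Matrix.trace_sum]
    refine Finset.sum_congr rfl fun i _ => ?_
    rw [Matrix.mul_smul, Matrix.trace_smul, key i, smul_eq_mul]
  rw [expand]
  refine Finset.sum_le_sum fun i _ => ?_
  refine mul_le_mul_of_nonneg_left ?_ (hp i)
  calc (a i) ⬝ᵥ (W *ᵥ b i)
      ≤ Real.sqrt (a i ⬝ᵥ a i) * Real.sqrt ((W *ᵥ b i) ⬝ᵥ (W *ᵥ b i)) := dot_cs _ _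
    _ ≤ Real.sqrt (a i ⬝ᵥ a i) * Real.sqrt (b i ⬝ᵥ b i) := by
        refine mul_le_mul_of_nonneg_left (Real.sqrt_le_sqrt (hW2 (b i))) (Real.sqrt_nonneg _)


/-! Real inner product on complex matrices. -/

def ip {d : ℕ} (A B : Matrix (Fin d) (Fin d) ℂ) : ℝ := ((Aᴴ * B).trace).re

lemma ip_eq_sum {d : ℕ} (A B : Matrix (Fin d) (Fin d) ℂ) :
    ip A B = ∑ p : (Fin d × Fin d) × Bool,
      (if p.2 then (A p.1.1 p.1.2).im else (A p.1.1 p.1.2).re) *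
      (if p.2 then (B p.1.1 p.1.2).im else (B p.1.1 p.1.2).re) := by
  rw [Fintype.sum_prod_type, Fintype.sum_prod_type]
  simp only [ip, Matrix.trace, Matrix.diag_apply, Matrix.mul_apply, Matrix.conjTranspose_apply,
    Complex.re_sum, Fintype.sum_bool]
  rw [Finset.sum_comm]
  refine Finset.sum_congr rfl fun i _ => Finset.sum_congr rfl fun j _ => ?_
  norm_num [Complex.mul_re, Complex.star_def, Complex.conj_re, Complex.conj_im]
  ring

lemma ip_nonneg {d : ℕ} (A : Matrix (Fin d) (Fin d) ℂ) : 0 ≤ ip A A := by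
  rw [ip_eq_sum]
  exact Finset.sum_nonneg fun p _ => mul_self_nonneg _

lemma ip_cs {d : ℕ} (A B : Matrix (Fin d) (Fin d) ℂ) :
    ip A B ≤ Real.sqrt (ip A A) * Real.sqrt (ip B B) := by
  have key : ∀ (f g : ((Fin d × Fin d) × Bool) → ℝ), ∑ p, f p * g p
      ≤ Real.sqrt (∑ p, f p * f p) * Real.sqrt (∑ p, g p * g p) := by
    intro f g
    have h := Real.sum_mul_le_sqrt_mul_sqrt Finset.univ f g
    simp only [pow_two] at h
    exact h
  rw [ip_eq_sum, ip_eq_sum, ip_eq_sum]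
  exact key _ _

lemma ip_sum_left {d : ℕ} {ι : Type*} [Fintype ι] (c : ι → ℝ) (F : ι → Matrix (Fin d) (Fin d) ℂ)
    (X : Matrix (Fin d) (Fin d) ℂ) :
    ip (∑ v, ((c v : ℝ) : ℂ) • F v) X = ∑ v, c v * ip (F v) X := by
  simp only [ip, Matrix.conjTranspose_sum, Matrix.conjTranspose_smul, Matrix.sum_mul,
    Matrix.smul_mul, Matrix.trace_sum, Matrix.trace_smul, Complex.re_sum]
  refine Finset.sum_congr rfl fun v _ => ?_
  simp [Complex.smul_re, Complex.mul_re]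

lemma ip_sum_right {d : ℕ} {ι : Type*} [Fintype ι] (c : ι → ℝ) (F : ι → Matrix (Fin d) (Fin d) ℂ)
    (X : Matrix (Fin d) (Fin d) ℂ) :
    ip X (∑ v, ((c v : ℝ) : ℂ) • F v) = ∑ v, c v * ip X (F v) := by
  simp only [ip, Matrix.mul_sum, Matrix.mul_smul, Matrix.trace_sum, Matrix.trace_smul,
    Complex.re_sum]
  refine Finset.sum_congr rfl fun v _ => ?_
  simp [Complex.smul_re]

/-- purity bound: `tr σ² ≤ 1` for a density matrix. -/
lemma trace_sq_le_one {d : ℕ} {σ : Matrix (Fin d) (Fin d) ℂ} (hσ : IsDensityMatrix σ) :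
    ((σ * σ).trace).re ≤ 1 := by
  classical
  obtain ⟨hpsd, htr⟩ := hσ
  have hH : σ.IsHermitian := hpsd.1
  set V : Matrix (Fin d) (Fin d) ℂ := (hH.eigenvectorUnitary : Matrix (Fin d) (Fin d) ℂ)
  have hVV : star V * V = 1 := (Matrix.mem_unitaryGroup_iff').mp (hH.eigenvectorUnitary).2
  have hspec : σ = V * Matrix.diagonal (fun i => ((hH.eigenvalues i : ℝ) : ℂ)) * star V := by
    have := hH.spectral_theorem
    rw [Unitary.conjStarAlgAut_apply] at this
    exact this
  have h2 : σ * σ = V * Matrix.diagonal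
      (fun i => ((hH.eigenvalues i : ℝ) : ℂ) * ((hH.eigenvalues i : ℝ) : ℂ)) * star V := by
    conv_lhs => rw [hspec]
    exact collapse' hVV _ _
  have htrd : ∀ f : Fin d → ℂ, (V * Matrix.diagonal f * star V).trace = ∑ i, f i := by
    intro f; rw [trace_conj' hVV, Matrix.trace_diagonal]
  have hsum1 : ∑ i, hH.eigenvalues i = 1 := by
    have h1 : σ.trace = ∑ i, ((hH.eigenvalues i : ℝ) : ℂ) := by
      conv_lhs => rw [hspec]
      exact htrd _
    rw [htr] at h1
    have h2 := congrArg Complex.re h1.symm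
    simpa [Complex.re_sum] using h2
  have hnn : ∀ i, 0 ≤ hH.eigenvalues i := fun i => hpsd.eigenvalues_nonneg i
  have hle1 : ∀ i, hH.eigenvalues i ≤ 1 := by
    intro i
    rw [← hsum1]
    exact Finset.single_le_sum (fun j _ => hnn j) (Finset.mem_univ i)
  rw [h2, htrd]
  have : (∑ i, ((hH.eigenvalues i : ℝ) : ℂ) * ((hH.eigenvalues i : ℝ) : ℂ)).re
      = ∑ i, hH.eigenvalues i * hH.eigenvalues i := by
    rw [Complex.re_sum]
    exact Finset.sum_congr rfl fun i _ => by
      rw [← Complex.ofReal_mul, Complex.ofReal_re]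
  rw [this, ← hsum1]
  exact Finset.sum_le_sum fun i _ => by
    nlinarith [hnn i, hle1 i]

lemma povm_dims {d M : ℕ} {x : ℝ}
    (hx : (d : ℝ) / (M : ℝ) ^ 2 < x ∧ x ≤ min ((d : ℝ) ^ 2 / (M : ℝ) ^ 2) ((d : ℝ) / (M : ℝ))) :
    1 ≤ d ∧ 2 ≤ M := by
  obtain ⟨h1, h2⟩ := hx
  have h3 : x ≤ (d : ℝ) ^ 2 / (M : ℝ) ^ 2 := le_trans h2 (min_le_left _ _)
  have h4 : x ≤ (d : ℝ) / (M : ℝ) := le_trans h2 (min_le_right _ _)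
  constructor
  · by_contra h; push_neg at h
    interval_cases d
    · norm_num [div_zero] at h1 h3
      linarith
  · by_contra h; push_neg at h
    interval_cases M
    · norm_num [div_zero] at h1 h3
      linarith
    · norm_num at h1 h4
      linarith

/-- Complex Gram matrix of the traceless parts of a POVM. -/
lemma povm_gram {d N M : ℕ} {x : ℝ} {E : Fin N → Fin M → Matrix (Fin d) (Fin d) ℂ}
    (hE : IsNMPOVM d N M x E) (v w : Fin N × Fin M) :
    ((E v.1 v.2 - ((M : ℂ))⁻¹ • 1) * (E w.1 w.2 - ((M : ℂ))⁻¹ • 1)).trace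
      = if v = w then ((x - (d : ℝ) / (M : ℝ) ^ 2 : ℝ) : ℂ)
        else if v.1 = w.1 then
          (((((d : ℝ) - M * x) / ((M : ℝ) * ((M : ℝ) - 1))) - (d : ℝ) / (M : ℝ) ^ 2 : ℝ) : ℂ)
        else 0 := by
  obtain ⟨hpos, hsum, htr1, htr2, htrneq, htrab, hx⟩ := hE
  obtain ⟨hd, hM⟩ := povm_dims hx
  have hdR : (1 : ℝ) ≤ (d : ℝ) := by exact_mod_cast hd
  have hMR : (2 : ℝ) ≤ (M : ℝ) := by exact_mod_cast hM
  have hMC : (M : ℂ) ≠ 0 := by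
    simp only [ne_eq, Nat.cast_eq_zero]; omega
  have hM1R : (M : ℝ) - 1 ≠ 0 := by linarith
  have hM1C : (M : ℂ) - 1 ≠ 0 := by
    have : ((M : ℝ) : ℂ) - 1 ≠ 0 := by
      rw [show ((M : ℝ) : ℂ) - 1 = (((M : ℝ) - 1 : ℝ) : ℂ) by push_cast; ring]
      exact_mod_cast Complex.ofReal_ne_zero.mpr hM1R
    simpa using this
  have expand : (E v.1 v.2 - (M : ℂ)⁻¹ • 1) * (E w.1 w.2 - (M : ℂ)⁻¹ • 1)
      = E v.1 v.2 * E w.1 w.2 - (M : ℂ)⁻¹ • E w.1 w.2 - (M : ℂ)⁻¹ • E v.1 v.2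
        + ((M : ℂ)⁻¹ * (M : ℂ)⁻¹) • (1 : Matrix (Fin d) (Fin d) ℂ) := by
    simp only [sub_mul, mul_sub, Matrix.smul_mul, Matrix.mul_smul, Matrix.one_mul,
      Matrix.mul_one, smul_smul]
    abel
  have htrone : (1 : Matrix (Fin d) (Fin d) ℂ).trace = (d : ℂ) := by
    simp [Matrix.trace_one]
  rw [expand]
  simp only [Matrix.trace_add, Matrix.trace_sub, Matrix.trace_smul, htr1, htrone, smul_eq_mul]
  by_cases hvw : v = w
  · subst hvw
    rw [htr2, if_pos rfl]
    push_cast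
    field_simp
    ring
  · rw [if_neg hvw]
    by_cases hα : v.1 = w.1
    · have hk : v.2 ≠ w.2 := by
        intro hk; exact hvw (Prod.ext hα hk)
      have := htrneq v.1 v.2 w.2 hk
      rw [show E w.1 w.2 = E v.1 w.2 by rw [hα]] at *
      rw [this, if_pos hα]
      push_cast
      field_simp
      ring
    · rw [htrab v.1 w.1 v.2 w.2 hα, if_neg hα]
      push_cast
      field_simp
      ring

lemma povm_traceless {d N M : ℕ} {x : ℝ} {E : Fin N → Fin M → Matrix (Fin d) (Fin d) ℂ}
    (hE : IsNMPOVM d N M x E) (v : Fin N × Fin M) :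
    (E v.1 v.2 - ((M : ℂ))⁻¹ • 1).trace = 0 := by
  obtain ⟨hpos, hsum, htr1, htr2, htrneq, htrab, hx⟩ := hE
  obtain ⟨hd, hM⟩ := povm_dims hx
  have hMC : (M : ℂ) ≠ 0 := by simp only [ne_eq, Nat.cast_eq_zero]; omega
  rw [Matrix.trace_sub, Matrix.trace_smul, htr1]
  simp only [Matrix.trace_one, smul_eq_mul]
  rw [show ((Fintype.card (Fin d) : ℂ)) = (d : ℂ) by simp]
  field_simp
  simp


lemma povm_card {d N M : ℕ} {x : ℝ} {E : Fin N → Fin M → Matrix (Fin d) (Fin d) ℂ}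
    (hE : IsNMPOVM d N M x E) :
    (N : ℝ) * ((M : ℝ) - 1) ≤ (d : ℝ) ^ 2 - 1 := by
  classical
  obtain ⟨hd, hM⟩ := povm_dims hE.2.2.2.2.2.2
  have hdR : (1 : ℝ) ≤ (d : ℝ) := by exact_mod_cast hd
  have hMR : (2 : ℝ) ≤ (M : ℝ) := by exact_mod_cast hM
  set g : ℝ := x - (d : ℝ) / (M : ℝ) ^ 2 with hgdef
  set c' : ℝ := ((d : ℝ) - M * x) / ((M : ℝ) * ((M : ℝ) - 1)) - (d : ℝ) / (M : ℝ) ^ 2 with hc'def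
  have hg : 0 < g := by
    have h := hE.2.2.2.2.2.2.1
    simp only [hgdef]
    linarith
  have hMpos : (0 : ℝ) < (M : ℝ) := by linarith
  have hM1pos : (0 : ℝ) < (M : ℝ) - 1 := by linarith
  have hrel : c' * ((M : ℝ) - 1) = -g := by
    rw [hc'def, hgdef]
    field_simp
    ring
  set Δ : Fin N × Fin M → Matrix (Fin d) (Fin d) ℂ :=
    fun v => E v.1 v.2 - ((M : ℂ))⁻¹ • 1 with hΔdef
  have gramC : ∀ v w : Fin N × Fin M, (Δ v * Δ w).trace
      = if v = w then ((g : ℝ) : ℂ) else if v.1 = w.1 then ((c' : ℝ) : ℂ) else 0 :=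
    fun v w => povm_gram hE v w
  have hd0 : 0 < d := hd
  set Ker := LinearMap.ker (Matrix.traceLinearMap (Fin d) ℂ ℂ) with hKerdef
  have hKer : Module.finrank ℂ Ker = d * d - 1 := by
    have hsurj : Function.Surjective (Matrix.traceLinearMap (Fin d) ℂ ℂ) := by
      intro z
      refine ⟨Matrix.diagonal (fun i => if i = (⟨0, hd0⟩ : Fin d) then z else 0), ?_⟩
      simp [Matrix.trace_diagonal]
    have hrn := LinearMap.finrank_range_add_finrank_ker (Matrix.traceLinearMap (Fin d) ℂ ℂ)
    rw [LinearMap.range_eq_top.mpr hsurj, finrank_top, Module.finrank_self,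
      Module.finrank_matrix, Fintype.card_fin, Module.finrank_self, mul_one] at hrn
    rw [hKerdef]
    generalize hD : d * d = D at hrn ⊢
    omega
  have hMM : M - 1 ≤ M := Nat.sub_le M 1
  have hlin : LinearIndependent ℂ
      (fun w : Fin N × Fin (M - 1) => Δ (w.1, Fin.castLE hMM w.2)) := by
    rw [Fintype.linearIndependent_iff]
    intro γ hγ w0
    have key : ∀ w0 : Fin N × Fin (M - 1),
        ∑ w : Fin N × Fin (M - 1),
          γ w * (Δ (w0.1, Fin.castLE hMM w0.2) * Δ (w.1, Fin.castLE hMM w.2)).trace = 0 := by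
      intro w1
      have h := congrArg (fun A => (Δ (w1.1, Fin.castLE hMM w1.2) * A).trace) hγ
      simp only [Matrix.mul_sum, Matrix.mul_smul, Matrix.trace_sum, Matrix.trace_smul,
        smul_eq_mul, Matrix.mul_zero, Matrix.trace_zero] at h
      rw [← h]
      try exact Finset.sum_congr rfl fun w _ => by ring
    have key2 : ∀ w0 : Fin N × Fin (M - 1),
        ((g : ℂ) - (c' : ℂ)) * γ w0 + (c' : ℂ) * (∑ k, γ (w0.1, k)) = 0 := by
      intro w1
      have h := key w1
      rw [Fintype.sum_prod_type] at h
      have hterm : ∀ (α : Fin N) (k : Fin (M - 1)),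
          γ (α, k) * (Δ (w1.1, Fin.castLE hMM w1.2) * Δ (α, Fin.castLE hMM k)).trace
          = if α = w1.1 then
              ((c' : ℂ) * γ (α, k) + (if k = w1.2 then ((g : ℂ) - (c' : ℂ)) * γ (α, k) else 0))
            else 0 := by
        intro α k
        rw [gramC]
        dsimp only
        by_cases hα : α = w1.1
        · subst hα
          by_cases hk : k = w1.2
          · subst hk
            rw [if_pos rfl, if_pos rfl, if_pos rfl]
            ring
          · have hne : (w1.1, Fin.castLE hMM w1.2) ≠ (w1.1, Fin.castLE hMM k) := by
              simp only [ne_eq, Prod.mk.injEq, not_and]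
              intro hfst hsnd
              exact hk ((Fin.castLE_injective hMM) hsnd.symm)
            rw [if_neg hne, if_pos rfl, if_pos rfl, if_neg hk]
            ring
        · have hne : (w1.1, Fin.castLE hMM w1.2) ≠ (α, Fin.castLE hMM k) := by
            simp only [ne_eq, Prod.mk.injEq, not_and]
            intro hfst; exact absurd hfst.symm hα
          rw [if_neg hne, if_neg (fun hc => hα hc.symm), if_neg hα, mul_zero]
      have e : ∑ α : Fin N, ∑ k : Fin (M - 1),
          (if α = w1.1 then
            ((c' : ℂ) * γ (α, k) + (if k = w1.2 then ((g : ℂ) - (c' : ℂ)) * γ (α, k) else 0))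
          else 0)
          = ∑ α : Fin N, ∑ k : Fin (M - 1),
            γ (α, k) * (Δ (w1.1, Fin.castLE hMM w1.2)
              * Δ ((α, k).1, Fin.castLE hMM (α, k).2)).trace :=
        Finset.sum_congr rfl fun α _ => Finset.sum_congr rfl fun k _ => (hterm α k).symm
      have h2 := e.trans h
      -- collapse the α-if
      have h3 : ∑ α : Fin N, ∑ k : Fin (M - 1),
          (if α = w1.1 then
            ((c' : ℂ) * γ (α, k) + (if k = w1.2 then ((g : ℂ) - (c' : ℂ)) * γ (α, k) else 0))
          else 0)
          = ∑ k : Fin (M - 1),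
            ((c' : ℂ) * γ (w1.1, k) + (if k = w1.2 then ((g : ℂ) - (c' : ℂ)) * γ (w1.1, k) else 0)) := by
        rw [Finset.sum_comm]
        refine Finset.sum_congr rfl fun k _ => ?_
        rw [Finset.sum_ite_eq' Finset.univ w1.1]
        simp
      rw [h3] at h2
      rw [Finset.sum_add_distrib, Finset.sum_ite_eq' Finset.univ w1.2] at h2
      simp only [Finset.mem_univ, if_true, ← Finset.mul_sum] at h2
      linear_combination h2
    -- sum the equations over k0
    have hS : (∑ k, γ (w0.1, k)) = 0 := by
      have hsumeq : ∑ k0 : Fin (M - 1),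
          (((g : ℂ) - (c' : ℂ)) * γ (w0.1, k0) + (c' : ℂ) * (∑ k, γ (w0.1, k))) = 0 := by
        rw [Finset.sum_eq_zero]
        intro k0 _
        exact key2 (w0.1, k0)
      rw [Finset.sum_add_distrib, ← Finset.mul_sum, Finset.sum_const, Finset.card_univ,
        Fintype.card_fin, nsmul_eq_mul] at hsumeq
      have hcast : ((M - 1 : ℕ) : ℂ) = (M : ℂ) - 1 := by
        push_cast [Nat.cast_sub (by omega : 1 ≤ M)]
        ring
      rw [hcast] at hsumeq
      have hfac : ((g : ℂ) - (c' : ℂ)) * (∑ k, γ (w0.1, k))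
          + ((M : ℂ) - 1) * ((c' : ℂ) * (∑ k, γ (w0.1, k)))
          = (((g + ((M : ℝ) - 2) * c' : ℝ)) : ℂ) * (∑ k, γ (w0.1, k)) := by
        push_cast
        ring
      rw [hfac] at hsumeq
      have hcoef : ((g + ((M : ℝ) - 2) * c' : ℝ)) ≠ 0 := by
        have : (g + ((M : ℝ) - 2) * c') * ((M : ℝ) - 1) = g := by
          nlinarith [hrel]
        intro hzero
        rw [hzero, zero_mul] at this
        linarith
      have := mul_eq_zero.mp hsumeq
      rcases this with h | h
      · exact absurd h (Complex.ofReal_ne_zero.mpr hcoef)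
      · exact h
    have h4 := key2 w0
    rw [hS, mul_zero, add_zero] at h4
    have hgc : ((g : ℂ) - (c' : ℂ)) ≠ 0 := by
      have : g - c' ≠ 0 := by nlinarith [hrel]
      rw [show ((g : ℝ) : ℂ) - ((c' : ℝ) : ℂ) = ((g - c' : ℝ) : ℂ) by push_cast; ring]
      exact Complex.ofReal_ne_zero.mpr this
    exact (mul_eq_zero.mp h4).resolve_left hgc
  -- move into the kernel of the trace
  have hlinK : LinearIndependent ℂ
      (fun w : Fin N × Fin (M - 1) =>
        (⟨Δ (w.1, Fin.castLE hMM w.2), by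
          simp only [hKerdef, LinearMap.mem_ker, Matrix.traceLinearMap_apply]
          exact povm_traceless hE _⟩ : Ker)) := by
    apply LinearIndependent.of_comp Ker.subtype
    exact hlin
  have hcard := hlinK.fintype_card_le_finrank
  rw [hKer, Fintype.card_prod, Fintype.card_fin, Fintype.card_fin] at hcard
  have h1M : 1 ≤ M := by omega
  have h1dd : 1 ≤ d * d := by nlinarith [hd]
  have hcardR : ((N * (M - 1) : ℕ) : ℝ) ≤ ((d * d - 1 : ℕ) : ℝ) := by exact_mod_cast hcard
  push_cast [Nat.cast_sub h1M, Nat.cast_sub h1dd] at hcardR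
  nlinarith [hcardR]


set_option maxHeartbeats 1000000 in
lemma povm_bound {d N M : ℕ} {x : ℝ} {E : Fin N → Fin M → Matrix (Fin d) (Fin d) ℂ}
    (hE : IsNMPOVM d N M x E) {σ : Matrix (Fin d) (Fin d) ℂ} (hσ : IsDensityMatrix σ) :
    ∑ v : Fin N × Fin M, ((E v.1 v.2 * σ).trace.re) ^ 2
      ≤ ((d : ℝ) - 1) * ((d : ℝ) ^ 2 + (M : ℝ) ^ 2 * x) /
          ((d : ℝ) * (M : ℝ) * ((M : ℝ) - 1)) := by
  classical
  obtain ⟨hd, hM⟩ := povm_dims hE.2.2.2.2.2.2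
  have hdR : (1 : ℝ) ≤ (d : ℝ) := by exact_mod_cast hd
  have hMR : (2 : ℝ) ≤ (M : ℝ) := by exact_mod_cast hM
  have hdpos : (0 : ℝ) < (d : ℝ) := by linarith
  have hMpos : (0 : ℝ) < (M : ℝ) := by linarith
  have hM1pos : (0 : ℝ) < (M : ℝ) - 1 := by linarith
  have hdne : (d : ℝ) ≠ 0 := ne_of_gt hdpos
  have hMne : (M : ℝ) ≠ 0 := ne_of_gt hMpos
  have hdC : (d : ℂ) ≠ 0 := by simp only [ne_eq, Nat.cast_eq_zero]; omega
  have hMC : (M : ℂ) ≠ 0 := by simp only [ne_eq, Nat.cast_eq_zero]; omega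
  set g : ℝ := x - (d : ℝ) / (M : ℝ) ^ 2 with hgdef
  set c' : ℝ := ((d : ℝ) - M * x) / ((M : ℝ) * ((M : ℝ) - 1)) - (d : ℝ) / (M : ℝ) ^ 2 with hc'def
  have hg : 0 < g := by
    have h := hE.2.2.2.2.2.2.1
    simp only [hgdef]; linarith
  have hrel : c' * ((M : ℝ) - 1) = -g := by
    rw [hc'def, hgdef]; field_simp; ring
  have hc'neg : c' ≤ 0 := by nlinarith [hrel]
  have hgc'pos : 0 < g - c' := by nlinarith [hrel]
  set Δ : Fin N × Fin M → Matrix (Fin d) (Fin d) ℂ :=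
    fun v => E v.1 v.2 - ((M : ℂ))⁻¹ • 1 with hΔdef
  set σt : Matrix (Fin d) (Fin d) ℂ := σ - ((d : ℂ))⁻¹ • 1 with hσtdef
  have hEH : ∀ v : Fin N × Fin M, (E v.1 v.2)ᴴ = E v.1 v.2 := fun v => (hE.1 v.1 v.2).1
  have hσH : σᴴ = σ := hσ.1.1
  have hΔH : ∀ v, (Δ v)ᴴ = Δ v := by
    intro v
    simp only [hΔdef, Matrix.conjTranspose_sub, Matrix.conjTranspose_smul,
      Matrix.conjTranspose_one, hEH v]
    congr 1
    simp
  have hσtH : σtᴴ = σt := by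
    simp only [hσtdef, Matrix.conjTranspose_sub, Matrix.conjTranspose_smul,
      Matrix.conjTranspose_one, hσH]
    congr 1
    simp
  set t : Fin N × Fin M → ℝ := fun v => ((E v.1 v.2 * σ).trace).re with htdef
  set s : Fin N × Fin M → ℝ := fun v => ip (Δ v) σt with hsdef
  -- s = t - 1/M
  have hst : ∀ v, s v = t v - 1 / (M : ℝ) := by
    intro v
    have expand : Δ v * σt = E v.1 v.2 * σ - (d : ℂ)⁻¹ • E v.1 v.2 - (M : ℂ)⁻¹ • σ
        + ((d : ℂ)⁻¹ * (M : ℂ)⁻¹) • (1 : Matrix (Fin d) (Fin d) ℂ) := by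
      simp only [hΔdef, hσtdef, sub_mul, mul_sub, Matrix.smul_mul, Matrix.mul_smul,
        Matrix.one_mul, Matrix.mul_one, smul_smul]
      abel
    have htrace : (Δ v * σt).trace = (E v.1 v.2 * σ).trace - ((1 / (M : ℝ) : ℝ) : ℂ) := by
      rw [expand]
      simp only [Matrix.trace_add, Matrix.trace_sub, Matrix.trace_smul, hE.2.2.1 v.1 v.2,
        hσ.2, Matrix.trace_one, smul_eq_mul]
      rw [show ((Fintype.card (Fin d) : ℂ)) = (d : ℂ) by simp]
      push_cast
      field_simp
      ring
    have : s v = ((Δ v * σt).trace).re := by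
      rw [hsdef]
      show ip (Δ v) σt = _
      rw [ip, hΔH v]
    rw [this, htrace, Complex.sub_re, Complex.ofReal_re, htdef]
  -- real Gram
  have ipGram : ∀ v w, ip (Δ v) (Δ w)
      = if v = w then g else if v.1 = w.1 then c' else 0 := by
    intro v w
    have : ip (Δ v) (Δ w) = ((Δ v * Δ w).trace).re := by rw [ip, hΔH v]
    rw [this, povm_gram hE v w]
    split_ifs with h1 h2
    · rw [Complex.ofReal_re, hgdef]
    · rw [Complex.ofReal_re, hc'def]
    · simp
  -- norm of σt
  have hσtnorm : ip σt σt ≤ ((d : ℝ) - 1) / (d : ℝ) := by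
    have expand : σt * σt = σ * σ - (d : ℂ)⁻¹ • σ - (d : ℂ)⁻¹ • σ
        + ((d : ℂ)⁻¹ * (d : ℂ)⁻¹) • (1 : Matrix (Fin d) (Fin d) ℂ) := by
      simp only [hσtdef, sub_mul, mul_sub, Matrix.smul_mul, Matrix.mul_smul,
        Matrix.one_mul, Matrix.mul_one, smul_smul]
      abel
    have htrace : (σt * σt).trace = (σ * σ).trace - ((1 / (d : ℝ) : ℝ) : ℂ) := by
      rw [expand]
      simp only [Matrix.trace_add, Matrix.trace_sub, Matrix.trace_smul, hσ.2,
        Matrix.trace_one, smul_eq_mul]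
      rw [show ((Fintype.card (Fin d) : ℂ)) = (d : ℂ) by simp]
      push_cast
      field_simp
      ring
    have h1 : ip σt σt = ((σ * σ).trace).re - 1 / (d : ℝ) := by
      rw [ip, hσtH, htrace, Complex.sub_re, Complex.ofReal_re]
    rw [h1]
    have := trace_sq_le_one hσ
    have hd1 : 1 - 1 / (d : ℝ) = ((d : ℝ) - 1) / (d : ℝ) := by field_simp
    linarith [this, hd1.le]
  -- sum of s is zero
  have hsumt : ∀ α : Fin N, ∑ k, t (α, k) = 1 := by
    intro α
    have h1 : ∑ k, (E α k * σ) = σ := by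
      rw [← Matrix.sum_mul, hE.2.1 α, Matrix.one_mul]
    have h2 : ∑ k, t (α, k) = ((∑ k, (E α k * σ)).trace).re := by
      rw [Matrix.trace_sum, Complex.re_sum]
    rw [h2, h1, hσ.2]
    simp
  have hsums : ∑ v : Fin N × Fin M, s v = 0 := by
    rw [Fintype.sum_prod_type]
    rw [Finset.sum_eq_zero]
    intro α _
    have : ∑ k, s (α, k) = (∑ k, t (α, k)) - (M : ℝ) * (1 / (M : ℝ)) := by
      rw [Finset.sum_congr rfl (fun k _ => hst (α, k)), Finset.sum_sub_distrib,
        Finset.sum_const, Finset.card_univ, Fintype.card_fin, nsmul_eq_mul]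
    rw [this, hsumt α]
    field_simp
    norm_num
  set SS : ℝ := ∑ v : Fin N × Fin M, (s v) ^ 2 with hSSdef
  have hSSnn : 0 ≤ SS := Finset.sum_nonneg fun v _ => sq_nonneg _
  -- frame bound
  have hframe : SS ≤ (g - c') * ip σt σt := by
    set T : Matrix (Fin d) (Fin d) ℂ := ∑ v, ((s v : ℝ) : ℂ) • Δ v with hTdef
    have h1 : ip T σt = SS := by
      rw [hTdef, ip_sum_left, hSSdef]
      exact Finset.sum_congr rfl fun v _ => by
        rw [show ip (Δ v) σt = s v from rfl]; ring
    have hrow : ∀ v : Fin N × Fin M,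
        ∑ w : Fin N × Fin M, s w * (if v = w then g else if v.1 = w.1 then c' else 0)
        = (g - c') * s v + c' * ∑ k, s (v.1, k) := by
      rintro ⟨α0, k0⟩
      rw [Fintype.sum_prod_type]
      have hterm : ∀ (β : Fin N) (l : Fin M),
          s (β, l) * (if (α0, k0) = (β, l) then g else if α0 = β then c' else 0)
          = if β = α0 then (c' * s (β, l) + if l = k0 then (g - c') * s (β, l) else 0)
            else 0 := by
        intro β l
        by_cases hβ : β = α0
        · subst hβ
          by_cases hl : l = k0
          · subst hl
            rw [if_pos rfl, if_pos rfl, if_pos rfl]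
            ring
          · rw [if_neg (by simp [Prod.ext_iff]; intro h; exact absurd h.symm hl),
              if_pos rfl, if_pos rfl, if_neg hl]
            ring
        · rw [if_neg (by simp [Prod.ext_iff]; intro h; exact absurd h.symm hβ),
            if_neg (fun h => hβ h.symm), if_neg hβ, mul_zero]
      rw [Finset.sum_congr rfl (fun β _ => Finset.sum_congr rfl (fun l _ => hterm β l))]
      rw [Finset.sum_comm]
      rw [Finset.sum_congr rfl (fun l _ => Finset.sum_ite_eq' Finset.univ α0 _)]
      simp only [Finset.mem_univ, if_true]
      rw [Finset.sum_add_distrib, Finset.sum_ite_eq' Finset.univ k0]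
      simp only [Finset.mem_univ, if_true, ← Finset.mul_sum]
      ring
    have hexp : ip T T = ∑ v, s v * ((g - c') * s v + c' * ∑ k, s (v.1, k)) := by
      rw [hTdef, ip_sum_left]
      refine Finset.sum_congr rfl fun v _ => ?_
      congr 1
      rw [ip_sum_right, ← hrow v]
      exact Finset.sum_congr rfl fun w _ => by rw [ipGram v w]
    have hexp2 : ip T T = (g - c') * SS + c' * ∑ α, (∑ k, s (α, k)) ^ 2 := by
      rw [hexp, hSSdef]
      have e1 : ∀ v : Fin N × Fin M, s v * ((g - c') * s v + c' * ∑ k, s (v.1, k))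
          = (g - c') * (s v) ^ 2 + c' * (s v * ∑ k, s (v.1, k)) := fun v => by ring
      rw [Finset.sum_congr rfl (fun v _ => e1 v), Finset.sum_add_distrib, ← Finset.mul_sum,
        ← Finset.mul_sum]
      congr 1
      congr 1
      rw [Fintype.sum_prod_type]
      refine Finset.sum_congr rfl fun α _ => ?_
      dsimp only
      rw [← Finset.sum_mul, pow_two]
    have hTT : ip T T ≤ (g - c') * SS := by
      rw [hexp2]
      have : c' * ∑ α, (∑ k, s (α, k)) ^ 2 ≤ 0 :=
        mul_nonpos_of_nonpos_of_nonneg hc'neg (Finset.sum_nonneg fun α _ => sq_nonneg _)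
      linarith
    have hCS := ip_cs T σt
    rw [h1] at hCS
    have hIσ : 0 ≤ ip σt σt := ip_nonneg σt
    have h2 : SS ≤ Real.sqrt ((g - c') * SS) * Real.sqrt (ip σt σt) := by
      refine le_trans hCS (mul_le_mul_of_nonneg_right ?_ (Real.sqrt_nonneg _))
      exact Real.sqrt_le_sqrt hTT
    rcases eq_or_lt_of_le hSSnn with heq | hlt
    · rw [← heq]
      exact mul_nonneg (le_of_lt hgc'pos) hIσ
    · have h3 : SS * SS ≤ ((g - c') * SS) * ip σt σt := by
        have h4 : Real.sqrt ((g - c') * SS) * Real.sqrt (ip σt σt)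
            = Real.sqrt (((g - c') * SS) * ip σt σt) :=
          (Real.sqrt_mul (mul_nonneg (le_of_lt hgc'pos) hSSnn) _).symm
        rw [h4] at h2
        have h5 := mul_le_mul h2 h2 (le_of_lt hlt) (Real.sqrt_nonneg _)
        rwa [Real.mul_self_sqrt
          (mul_nonneg (mul_nonneg (le_of_lt hgc'pos) hSSnn) hIσ)] at h5
      nlinarith [hlt]
  -- combine
  have hdecomp : ∑ v : Fin N × Fin M, (t v) ^ 2 = SS + (N : ℝ) / (M : ℝ) := by
    have e : ∀ v : Fin N × Fin M, (t v) ^ 2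
        = (s v) ^ 2 + (2 / (M : ℝ)) * s v + (1 / (M : ℝ)) ^ 2 := by
      intro v
      linear_combination (-(s v + t v + 1 / (M : ℝ))) * (hst v)
    rw [Finset.sum_congr rfl (fun v _ => e v), Finset.sum_add_distrib, Finset.sum_add_distrib,
      ← Finset.mul_sum, hsums, mul_zero, add_zero, Finset.sum_const, Finset.card_univ,
      Fintype.card_prod, Fintype.card_fin, Fintype.card_fin, nsmul_eq_mul, ← hSSdef]
    congr 1
    push_cast
    field_simp
  have hM1ne : (M : ℝ) - 1 ≠ 0 := ne_of_gt hM1pos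
  have hNcard := povm_card hE
  set lam : ℝ := g - c' with hlamdef
  have hlam : lam * ((M : ℝ) * ((M : ℝ) - 1)) = (M : ℝ) ^ 2 * x - (d : ℝ) := by
    have h1 : lam * ((M : ℝ) - 1) = g * (M : ℝ) := by
      rw [hlamdef]
      nlinarith [hrel]
    have h2 : g * (M : ℝ) ^ 2 = (M : ℝ) ^ 2 * x - (d : ℝ) := by
      rw [hgdef]
      field_simp
    nlinarith [h1, h2]
  have hsplit0 : ∀ L : ℝ, L * ((M : ℝ) * ((M : ℝ) - 1)) = (M : ℝ) ^ 2 * x - (d : ℝ) →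
      ((d : ℝ) - 1) * ((d : ℝ) ^ 2 + (M : ℝ) ^ 2 * x) / ((d : ℝ) * (M : ℝ) * ((M : ℝ) - 1))
      = L * (((d : ℝ) - 1) / (d : ℝ)) + ((d : ℝ) ^ 2 - 1) / ((M : ℝ) * ((M : ℝ) - 1)) := by
    intro L hL
    have e1 : ((d : ℝ) - 1) * ((d : ℝ) ^ 2 + (M : ℝ) ^ 2 * x)
        = (((d : ℝ) - 1) * L) * ((M : ℝ) * ((M : ℝ) - 1)) + (d : ℝ) * ((d : ℝ) ^ 2 - 1) := by
      linear_combination (1 - (d : ℝ)) * hL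
    rw [show (d : ℝ) * (M : ℝ) * ((M : ℝ) - 1) = (d : ℝ) * ((M : ℝ) * ((M : ℝ) - 1)) by ring,
      e1, add_div]
    congr 1
    · field_simp
    · field_simp
  have hsplit := hsplit0 lam hlam
  have hNM : (N : ℝ) / (M : ℝ) ≤ ((d : ℝ) ^ 2 - 1) / ((M : ℝ) * ((M : ℝ) - 1)) := by
    rw [div_le_div_iff₀ hMpos (by positivity)]
    nlinarith [hNcard, hMpos]
  have hmono : SS ≤ lam * (((d : ℝ) - 1) / (d : ℝ)) := by
    refine le_trans hframe ?_
    exact mul_le_mul_of_nonneg_left hσtnorm (le_of_lt hgc'pos)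
  calc ∑ v : Fin N × Fin M, ((E v.1 v.2 * σ).trace.re) ^ 2
      = SS + (N : ℝ) / (M : ℝ) := hdecomp
    _ ≤ lam * (((d : ℝ) - 1) / (d : ℝ)) + ((d : ℝ) ^ 2 - 1) / ((M : ℝ) * ((M : ℝ) - 1)) := by
        exact add_le_add hmono hNM
    _ = ((d : ℝ) - 1) * ((d : ℝ) ^ 2 + (M : ℝ) ^ 2 * x) /
          ((d : ℝ) * (M : ℝ) * ((M : ℝ) - 1)) := hsplit.symm


lemma trace_mul_real {d : ℕ} {A B : Matrix (Fin d) (Fin d) ℂ} (hA : Aᴴ = A) (hB : Bᴴ = B) :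
    (A * B).trace = ((((A * B).trace.re : ℝ)) : ℂ) := by
  have h : (starRingEnd ℂ) ((A * B).trace) = (A * B).trace := by
    have h1 : star ((A * B).trace) = ((A * B)ᴴ).trace := (Matrix.trace_conjTranspose _).symm
    rw [Matrix.conjTranspose_mul, hA, hB, Matrix.trace_mul_comm B A] at h1
    exact h1
  exact ((Complex.conj_eq_iff_re).mp h).symm

lemma redC_sum_smul {dA dB dC n : ℕ} (c : Fin n → ℂ)
    (K : Fin n → Matrix (Fin dA × Fin dB × Fin dC) (Fin dA × Fin dB × Fin dC) ℂ) :
    redC (∑ i, c i • K i) = ∑ i, c i • redC (K i) := by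
  ext m m'
  simp only [redC, Matrix.of_apply, Matrix.sum_apply, Matrix.smul_apply, smul_eq_mul,
    Finset.mul_sum]
  calc ∑ i : Fin dA, ∑ k : Fin dB, ∑ j : Fin n, c j * K j (i, k, m) (i, k, m')
      = ∑ i : Fin dA, ∑ j : Fin n, ∑ k : Fin dB, c j * K j (i, k, m) (i, k, m') :=
        Finset.sum_congr rfl fun i _ => Finset.sum_comm
    _ = ∑ j : Fin n, ∑ i : Fin dA, ∑ k : Fin dB, c j * K j (i, k, m) (i, k, m') :=
        Finset.sum_comm

lemma redAB_sum_smul {dA dB dC n : ℕ} (c : Fin n → ℂ)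
    (K : Fin n → Matrix (Fin dA × Fin dB × Fin dC) (Fin dA × Fin dB × Fin dC) ℂ) :
    redAB (∑ i, c i • K i) = ∑ i, c i • redAB (K i) := by
  ext ik i'k'
  simp only [redAB, Matrix.of_apply, Matrix.sum_apply, Matrix.smul_apply, smul_eq_mul,
    Finset.mul_sum]
  exact Finset.sum_comm

lemma redC_kron {dA dB dC : ℕ} (A : Matrix (Fin dA) (Fin dA) ℂ) (B : Matrix (Fin dB) (Fin dB) ℂ)
    (C : Matrix (Fin dC) (Fin dC) ℂ) :
    redC (A ⊗ₖ (B ⊗ₖ C)) = (A.trace * B.trace) • C := by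
  ext m m'
  simp only [redC, Matrix.of_apply, Matrix.kroneckerMap_apply, Matrix.smul_apply, smul_eq_mul,
    Matrix.trace, Matrix.diag_apply]
  calc ∑ i : Fin dA, ∑ k : Fin dB, A i i * (B k k * C m m')
      = ∑ i : Fin dA, A i i * ((∑ k : Fin dB, B k k) * C m m') := by
        refine Finset.sum_congr rfl fun i _ => ?_
        rw [← Finset.mul_sum, ← Finset.sum_mul]
    _ = (∑ i : Fin dA, A i i) * ((∑ k : Fin dB, B k k) * C m m') := by rw [← Finset.sum_mul]
    _ = (∑ i : Fin dA, A i i) * (∑ k : Fin dB, B k k) * C m m' := by ring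

lemma redAB_kron {dA dB dC : ℕ} (A : Matrix (Fin dA) (Fin dA) ℂ) (B : Matrix (Fin dB) (Fin dB) ℂ)
    (C : Matrix (Fin dC) (Fin dC) ℂ) :
    redAB (A ⊗ₖ (B ⊗ₖ C)) = C.trace • (A ⊗ₖ B) := by
  ext ik i'k'
  simp only [redAB, Matrix.of_apply, Matrix.kroneckerMap_apply, Matrix.smul_apply, smul_eq_mul,
    Matrix.trace, Matrix.diag_apply]
  rw [← Finset.mul_sum, ← Finset.mul_sum]
  ring

lemma tr_kron2 {dA dB : ℕ} (X A : Matrix (Fin dA) (Fin dA) ℂ) (Y B : Matrix (Fin dB) (Fin dB) ℂ) :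
    ((X ⊗ₖ Y) * (A ⊗ₖ B)).trace = (X * A).trace * (Y * B).trace := by
  rw [← Matrix.mul_kronecker_mul, Matrix.trace_kronecker]

lemma tr_kron3 {dA dB dC : ℕ} (X A : Matrix (Fin dA) (Fin dA) ℂ)
    (Y B : Matrix (Fin dB) (Fin dB) ℂ) (Z C : Matrix (Fin dC) (Fin dC) ℂ) :
    ((X ⊗ₖ (Y ⊗ₖ Z)) * (A ⊗ₖ (B ⊗ₖ C))).trace
      = (X * A).trace * ((Y * B).trace * (Z * C).trace) := by
  rw [← Matrix.mul_kronecker_mul, ← Matrix.mul_kronecker_mul, Matrix.trace_kronecker,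
    Matrix.trace_kronecker]

end SepAux


/-- Theorem 2, bipartition `C|AB`: trace-norm separability criterion for fully
separable tripartite states. -/
theorem traceNorm_MMatCAB_le_of_fullySeparable
    {dA dB dC NA MA NB MB NC MC : ℕ} {xA xB xC : ℝ}
    (EA : Fin NA → Fin MA → Matrix (Fin dA) (Fin dA) ℂ)
    (EB : Fin NB → Fin MB → Matrix (Fin dB) (Fin dB) ℂ)
    (EC : Fin NC → Fin MC → Matrix (Fin dC) (Fin dC) ℂ)
    (hEA : IsNMPOVM dA NA MA xA EA) (hEB : IsNMPOVM dB NB MB xB EB)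
    (hEC : IsNMPOVM dC NC MC xC EC)
    (ρ : Matrix (Fin dA × Fin dB × Fin dC) (Fin dA × Fin dB × Fin dC) ℂ)
    (hsep : FullySeparable3 ρ)
    (μ ν : ℝ) (l : ℕ) (hl : 0 < l) :
    traceNorm (MMatCAB NA MA NB MB NC MC l EA EB EC μ ν ρ) ≤
      Real.sqrt
        (((l : ℝ) * μ ^ 2 + ((dC : ℝ) - 1) * ((dC : ℝ) ^ 2 + (MC : ℝ) ^ 2 * xC) /
            ((dC : ℝ) * (MC : ℝ) * ((MC : ℝ) - 1))) *
         ((l : ℝ) * ν ^ 2 +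
            ((dA : ℝ) - 1) * ((dA : ℝ) ^ 2 + (MA : ℝ) ^ 2 * xA) /
              ((dA : ℝ) * (MA : ℝ) * ((MA : ℝ) - 1)) *
            (((dB : ℝ) - 1) * ((dB : ℝ) ^ 2 + (MB : ℝ) ^ 2 * xB) /
              ((dB : ℝ) * (MB : ℝ) * ((MB : ℝ) - 1))))) := by
  classical
  obtain ⟨n, p, ρA, ρB, ρC, hp, hp1, hρA, hρB, hρC, hρ⟩ := hsep
  set tA : Fin n → (Fin NA × Fin MA) → ℝ :=
    fun i v => ((EA v.1 v.2 * ρA i).trace).re with htAdef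
  set tB : Fin n → (Fin NB × Fin MB) → ℝ :=
    fun i v => ((EB v.1 v.2 * ρB i).trace).re with htBdef
  set tC : Fin n → (Fin NC × Fin MC) → ℝ :=
    fun i v => ((EC v.1 v.2 * ρC i).trace).re with htCdef
  have hzA : ∀ i v, (EA v.1 v.2 * ρA i).trace = ((tA i v : ℝ) : ℂ) := fun i v =>
    SepAux.trace_mul_real (hEA.1 v.1 v.2).1 (hρA i).1.1
  have hzB : ∀ i v, (EB v.1 v.2 * ρB i).trace = ((tB i v : ℝ) : ℂ) := fun i v =>
    SepAux.trace_mul_real (hEB.1 v.1 v.2).1 (hρB i).1.1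
  have hzC : ∀ i v, (EC v.1 v.2 * ρC i).trace = ((tC i v : ℝ) : ℂ) := fun i v =>
    SepAux.trace_mul_real (hEC.1 v.1 v.2).1 (hρC i).1.1
  set a : Fin n → (Fin l ⊕ (Fin NC × Fin MC)) → ℝ :=
    fun i => Sum.elim (fun _ => μ) (fun gn => tC i gn) with hadef
  set b : Fin n → (Fin l ⊕ ((Fin NA × Fin MA) × (Fin NB × Fin MB))) → ℝ :=
    fun i => Sum.elim (fun _ => ν) (fun vc => tA i vc.1 * tB i vc.2) with hbdef
  have hredAB : redAB ρ = ∑ i, (p i : ℂ) • (ρA i ⊗ₖ ρB i) := by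
    rw [hρ, SepAux.redAB_sum_smul]
    refine Finset.sum_congr rfl fun i _ => ?_
    rw [SepAux.redAB_kron, (hρC i).2, one_smul]
  have hredC : redC ρ = ∑ i, (p i : ℂ) • ρC i := by
    rw [hρ, SepAux.redC_sum_smul]
    refine Finset.sum_congr rfl fun i _ => ?_
    rw [SepAux.redC_kron, (hρA i).2, (hρB i).2, one_mul, one_smul]
  have hAB : ∀ v : (Fin NA × Fin MA) × (Fin NB × Fin MB),
      (((EA v.1.1 v.1.2 ⊗ₖ EB v.2.1 v.2.2) * redAB ρ).trace).re
        = ∑ i, p i * (tA i v.1 * tB i v.2) := by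
    intro v
    rw [hredAB, Matrix.mul_sum, Matrix.trace_sum, Complex.re_sum]
    refine Finset.sum_congr rfl fun i _ => ?_
    rw [Matrix.mul_smul, Matrix.trace_smul, SepAux.tr_kron2, hzA, hzB, smul_eq_mul,
      ← Complex.ofReal_mul, ← Complex.ofReal_mul, Complex.ofReal_re]
  have hCred : ∀ gn : Fin NC × Fin MC,
      ((EC gn.1 gn.2 * redC ρ).trace).re = ∑ i, p i * tC i gn := by
    intro gn
    rw [hredC, Matrix.mul_sum, Matrix.trace_sum, Complex.re_sum]
    refine Finset.sum_congr rfl fun i _ => ?_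
    rw [Matrix.mul_smul, Matrix.trace_smul, hzC, smul_eq_mul,
      ← Complex.ofReal_mul, Complex.ofReal_re]
  have hP : ∀ (gn : Fin NC × Fin MC) (v : (Fin NA × Fin MA) × (Fin NB × Fin MB)),
      (((EA v.1.1 v.1.2 ⊗ₖ (EB v.2.1 v.2.2 ⊗ₖ EC gn.1 gn.2)) * ρ).trace).re
        = ∑ i, p i * (tC i gn * (tA i v.1 * tB i v.2)) := by
    intro gn v
    rw [hρ, Matrix.mul_sum, Matrix.trace_sum, Complex.re_sum]
    refine Finset.sum_congr rfl fun i _ => ?_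
    rw [Matrix.mul_smul, Matrix.trace_smul, SepAux.tr_kron3, hzA, hzB, hzC, smul_eq_mul]
    rw [← Complex.ofReal_mul, ← Complex.ofReal_mul, ← Complex.ofReal_mul, Complex.ofReal_re]
    ring
  have hdec : MMatCAB NA MA NB MB NC MC l EA EB EC μ ν ρ
      = ∑ i, p i • Matrix.of (fun r c => a i r * b i c) := by
    ext r c
    have hRHS : (∑ i, p i • Matrix.of (fun r c => a i r * b i c)) r c
        = ∑ i, p i * (a i r * b i c) := by
      simp [Matrix.sum_apply, Matrix.smul_apply]
    rw [hRHS]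
    rcases r with r | gn <;> rcases c with c | v
    · simp only [MMatCAB, Matrix.fromBlocks_apply₁₁, Matrix.of_apply, hadef, hbdef,
        Sum.elim_inl]
      rw [← Finset.sum_mul, hp1, one_mul]
    · simp only [MMatCAB, Matrix.fromBlocks_apply₁₂, Matrix.of_apply, hadef, hbdef,
        Sum.elim_inl, Sum.elim_inr]
      rw [hAB v, Finset.mul_sum]
      exact Finset.sum_congr rfl fun i _ => by ring
    · simp only [MMatCAB, Matrix.fromBlocks_apply₂₁, Matrix.of_apply, hadef, hbdef,
        Sum.elim_inl, Sum.elim_inr]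
      rw [hCred gn, Finset.mul_sum]
      exact Finset.sum_congr rfl fun i _ => by ring
    · simp only [MMatCAB, Matrix.fromBlocks_apply₂₂, Matrix.of_apply, hadef, hbdef,
        Sum.elim_inr]
      rw [hP gn v]
  set CCA : ℝ := ((dA : ℝ) - 1) * ((dA : ℝ) ^ 2 + (MA : ℝ) ^ 2 * xA) /
      ((dA : ℝ) * (MA : ℝ) * ((MA : ℝ) - 1)) with hCCAdef
  set CCB : ℝ := ((dB : ℝ) - 1) * ((dB : ℝ) ^ 2 + (MB : ℝ) ^ 2 * xB) /
      ((dB : ℝ) * (MB : ℝ) * ((MB : ℝ) - 1)) with hCCBdef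
  set CCC : ℝ := ((dC : ℝ) - 1) * ((dC : ℝ) ^ 2 + (MC : ℝ) ^ 2 * xC) /
      ((dC : ℝ) * (MC : ℝ) * ((MC : ℝ) - 1)) with hCCCdef
  have hCCnn : ∀ (d M : ℕ) (x : ℝ),
      (d : ℝ) / (M : ℝ) ^ 2 < x ∧ x ≤ min ((d : ℝ) ^ 2 / (M : ℝ) ^ 2) ((d : ℝ) / (M : ℝ)) →
      0 ≤ ((d : ℝ) - 1) * ((d : ℝ) ^ 2 + (M : ℝ) ^ 2 * x) /
        ((d : ℝ) * (M : ℝ) * ((M : ℝ) - 1)) := by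
    intro d M x hx
    obtain ⟨hd, hM⟩ := SepAux.povm_dims hx
    have hdR : (1 : ℝ) ≤ (d : ℝ) := by exact_mod_cast hd
    have hMR : (2 : ℝ) ≤ (M : ℝ) := by exact_mod_cast hM
    have hxpos : 0 < x := by
      have h1 := hx.1
      have : (0 : ℝ) ≤ (d : ℝ) / (M : ℝ) ^ 2 := by positivity
      linarith
    apply div_nonneg
    · have h5 : 0 ≤ (M : ℝ) ^ 2 * x := mul_nonneg (sq_nonneg _) hxpos.le
      have h6 : (0:ℝ) ≤ (d : ℝ) ^ 2 := sq_nonneg _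
      nlinarith [h5, h6]
    · have : (0:ℝ) ≤ (M : ℝ) - 1 := by linarith
      positivity
  have hCCAnn : 0 ≤ CCA := hCCnn dA MA xA hEA.2.2.2.2.2.2
  have hCCBnn : 0 ≤ CCB := hCCnn dB MB xB hEB.2.2.2.2.2.2
  have hCCCnn : 0 ≤ CCC := hCCnn dC MC xC hEC.2.2.2.2.2.2
  set X : ℝ := (l : ℝ) * μ ^ 2 + CCC with hXdef
  set Y : ℝ := (l : ℝ) * ν ^ 2 + CCA * CCB with hYdef
  have hXnn : 0 ≤ X := by
    rw [hXdef]; positivity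
  have haa : ∀ i, a i ⬝ᵥ a i ≤ X := by
    intro i
    have h1 : a i ⬝ᵥ a i = (∑ _r : Fin l, μ * μ) + ∑ gn : Fin NC × Fin MC,
        tC i gn * tC i gn := by
      simp [dotProduct, Fintype.sum_sum_type, hadef]
    rw [h1, Finset.sum_const, Finset.card_univ, Fintype.card_fin, nsmul_eq_mul, hXdef]
    have h2 : ∑ gn : Fin NC × Fin MC, tC i gn * tC i gn
        = ∑ gn : Fin NC × Fin MC, ((EC gn.1 gn.2 * ρC i).trace.re) ^ 2 :=
      Finset.sum_congr rfl fun gn _ => by rw [htCdef, pow_two]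
    rw [h2]
    have h3 := SepAux.povm_bound hEC (hρC i)
    have h4 : (l : ℝ) * (μ * μ) = (l : ℝ) * μ ^ 2 := by ring
    rw [h4]
    exact add_le_add_right h3 _
  have hbb : ∀ i, b i ⬝ᵥ b i ≤ Y := by
    intro i
    have h1 : b i ⬝ᵥ b i = (∑ _r : Fin l, ν * ν)
        + ∑ v : (Fin NA × Fin MA) × (Fin NB × Fin MB),
            (tA i v.1 * tB i v.2) * (tA i v.1 * tB i v.2) := by
      simp [dotProduct, Fintype.sum_sum_type, hbdef]
    have h2 : ∑ v : (Fin NA × Fin MA) × (Fin NB × Fin MB),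
        (tA i v.1 * tB i v.2) * (tA i v.1 * tB i v.2)
        = (∑ v1 : Fin NA × Fin MA, tA i v1 * tA i v1)
          * (∑ v2 : Fin NB × Fin MB, tB i v2 * tB i v2) := by
      rw [Fintype.sum_prod_type, Finset.sum_mul]
      refine Finset.sum_congr rfl fun v1 _ => ?_
      rw [Finset.mul_sum]
      exact Finset.sum_congr rfl fun v2 _ => by ring
    have hA2 : ∑ v1 : Fin NA × Fin MA, tA i v1 * tA i v1 ≤ CCA := by
      have e : ∑ v1 : Fin NA × Fin MA, tA i v1 * tA i v1
          = ∑ v1 : Fin NA × Fin MA, ((EA v1.1 v1.2 * ρA i).trace.re) ^ 2 :=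
        Finset.sum_congr rfl fun v1 _ => by rw [htAdef, pow_two]
      rw [e, hCCAdef]
      exact SepAux.povm_bound hEA (hρA i)
    have hB2 : ∑ v2 : Fin NB × Fin MB, tB i v2 * tB i v2 ≤ CCB := by
      have e : ∑ v2 : Fin NB × Fin MB, tB i v2 * tB i v2
          = ∑ v2 : Fin NB × Fin MB, ((EB v2.1 v2.2 * ρB i).trace.re) ^ 2 :=
        Finset.sum_congr rfl fun v2 _ => by rw [htBdef, pow_two]
      rw [e, hCCBdef]
      exact SepAux.povm_bound hEB (hρB i)
    have hA2nn : 0 ≤ ∑ v1 : Fin NA × Fin MA, tA i v1 * tA i v1 :=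
      Finset.sum_nonneg fun v1 _ => mul_self_nonneg _
    rw [h1, h2, Finset.sum_const, Finset.card_univ, Fintype.card_fin, nsmul_eq_mul, hYdef]
    have h4 : (l : ℝ) * (ν * ν) = (l : ℝ) * ν ^ 2 := by ring
    rw [h4]
    exact add_le_add_right (mul_le_mul hA2 hB2
      (Finset.sum_nonneg fun v2 _ => mul_self_nonneg _) (le_trans hA2nn hA2)) _
  have hmain := SepAux.traceNorm_le_decomp _ p a b hp hdec
  refine le_trans hmain ?_
  have step : ∀ i ∈ Finset.univ, p i * (Real.sqrt (a i ⬝ᵥ a i) * Real.sqrt (b i ⬝ᵥ b i))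
      ≤ p i * (Real.sqrt X * Real.sqrt Y) := by
    intro i _
    refine mul_le_mul_of_nonneg_left ?_ (hp i)
    exact mul_le_mul (Real.sqrt_le_sqrt (haa i)) (Real.sqrt_le_sqrt (hbb i))
      (Real.sqrt_nonneg _) (Real.sqrt_nonneg _)
  calc ∑ i, p i * (Real.sqrt (a i ⬝ᵥ a i) * Real.sqrt (b i ⬝ᵥ b i))
      ≤ ∑ i, p i * (Real.sqrt X * Real.sqrt Y) := Finset.sum_le_sum step
    _ = Real.sqrt X * Real.sqrt Y := by rw [← Finset.sum_mul, hp1, one_mul]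
    _ = Real.sqrt (X * Y) := (Real.sqrt_mul hXnn _).symm
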